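/- arXiv:2308.05419 — 10 statements merged into one kernel-verified Lean document; each statement's English description precedes it below -/
import Mathlib

section
/- Let (X,d) be a metric space, T : X → X a generalized Kannan type mapping with constant λ ∈ [0, 2/3), and let x be an accumulation point of X at which T is continuous. Then d(Tx,Ty) ≤ λ(d(x,Tx) + d(y,Ty)/2) for all y ∈ X. -/
/-!
Fix `y ≠ x` and let `z → x` through points different from `x` and `y`, which exist because `x`
is an accumulation point. By continuity of `T` at `x` the generalized Kannan inequality for the
triple `(x, y, z)` tends to `2 d(Tx,Ty) ≤ λ (2 d(x,Tx) + d(y,Ty))`.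
-/

open Filter Topology

def IsGeneralizedKannan {X : Type*} [MetricSpace X] (T : X → X) (l : ℝ) : Prop :=
  ∀ x y z : X, x ≠ y → y ≠ z → x ≠ z →
    dist (T x) (T y) + dist (T y) (T z) + dist (T x) (T z) ≤
      l * (dist x (T x) + dist y (T y) + dist z (T z))

theorem IsGeneralizedKannan.two_mul_dist_le {X : Type*} [MetricSpace X] {T : X → X} {l : ℝ}
    (hT : IsGeneralizedKannan T l) {x y : X} [(𝓝[≠] x).NeBot] (hcont : ContinuousAt T x)
    (hxy : x ≠ y) :
    2 * dist (T x) (T y) ≤ l * (2 * dist x (T x) + dist y (T y)) := by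
  have hlhs : ContinuousAt
      (fun z ↦ dist (T x) (T y) + dist (T y) (T z) + dist (T x) (T z)) x := by fun_prop
  have hrhs : ContinuousAt (fun z ↦ l * (dist x (T x) + dist y (T y) + dist z (T z))) x := by
    fun_prop
  have hev : ∀ᶠ z in 𝓝[≠] x,
      dist (T x) (T y) + dist (T y) (T z) + dist (T x) (T z) ≤
        l * (dist x (T x) + dist y (T y) + dist z (T z)) := by
    filter_upwards [self_mem_nhdsWithin, nhdsWithin_le_nhds (eventually_ne_nhds hxy)]
      with z hzx hzy
    exact hT x y z hxy (Ne.symm hzy) (Ne.symm hzx)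
  have hlim := le_of_tendsto_of_tendsto (hlhs.tendsto.mono_left nhdsWithin_le_nhds)
    (hrhs.tendsto.mono_left nhdsWithin_le_nhds) hev
  rw [dist_self, dist_comm (T y)] at hlim
  linarith

theorem stmt_1_general {X : Type*} [MetricSpace X] (T : X → X)
    (l : ℝ) (hl0 : 0 ≤ l)
    (hGK : ∀ x y z : X, x ≠ y → y ≠ z → x ≠ z →
      dist (T x) (T y) + dist (T y) (T z) + dist (T x) (T z) ≤
        l * (dist x (T x) + dist y (T y) + dist z (T z)))
    (x : X) (hacc : (nhdsWithin x {x}ᶜ).NeBot) (hcont : ContinuousAt T x) :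
    ∀ y : X, dist (T x) (T y) ≤ l * (dist x (T x) + dist y (T y) / 2) := by
  intro y
  rcases eq_or_ne x y with rfl | hxy
  · rw [dist_self]
    positivity
  · have := IsGeneralizedKannan.two_mul_dist_le hGK hcont hxy
    linarith

theorem stmt_1 {X : Type*} [MetricSpace X] (T : X → X)
    (l : ℝ) (hl0 : 0 ≤ l) (hl : l < 2/3)
    (hGK : ∀ x y z : X, x ≠ y → y ≠ z → x ≠ z →
      dist (T x) (T y) + dist (T y) (T z) + dist (T x) (T z) ≤
        l * (dist x (T x) + dist y (T y) + dist z (T z)))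
    (x : X) (hacc : (nhdsWithin x {x}ᶜ).NeBot) (hcont : ContinuousAt T x) :
    ∀ y : X, dist (T x) (T y) ≤ l * (dist x (T x) + dist y (T y) / 2) :=
  stmt_1_general T l hl0 hGK x hacc hcont
end

section
/- Let (X,d) be a complete metric space with |X| ≥ 3 and let T : X → X satisfy: (i) T(T(x)) ≠ x for all x with Tx ≠ x, and (ii) T is a generalized Kannan type mapping with some λ ∈ [0, 2/3). Then T has a fixed point. -/
/-!
Iterating `T` from any point gives an orbit `xₙ` of pairwise-distinct consecutive triples
`xₙ, xₙ₊₁, xₙ₊₂` (no fixed points, and condition (i) rules out 2-cycles). Applying the Kannan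
inequality to such a triple, together with the triangle inequality, gives
`d(xₙ₊₁, xₙ₊₂) ≤ λ / (2 - 2λ) · d(xₙ, xₙ₊₁)`, a contraction exactly when `λ < 2/3`; so the orbit is
Cauchy. At its limit `p`, the triple `xₙ, xₙ₊₁, p` bounds `d(xₙ₊₁, Tp) + d(xₙ₊₂, Tp)` by
`λ (d(xₙ, xₙ₊₁) + d(xₙ₊₁, xₙ₊₂) + d(p, Tp))`; letting `n → ∞` gives `2 d(p, Tp) ≤ λ d(p, Tp)`,
so `Tp = p`.
-/

open Filter Topology

section

variable {X : Type*} [MetricSpace X]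

def GeneralizedKannan (T : X → X) (l : ℝ) : Prop :=
  ∀ x y z : X, x ≠ y → y ≠ z → x ≠ z →
    dist (T x) (T y) + dist (T y) (T z) + dist (T x) (T z) ≤
      l * (dist x (T x) + dist y (T y) + dist z (T z))

lemma two_sub_two_mul_mul_le {l a b c : ℝ} (hl0 : 0 ≤ l) (hl2 : l ≤ 2)
    (hb : 2 * b ≤ l * (a + b + c)) (hc : 2 * c ≤ l * (a + b + c)) :
    (2 - 2 * l) * b ≤ l * a := by
  nlinarith [mul_nonneg (sub_nonneg.2 hl2) (sub_nonneg.2 hb), mul_nonneg hl0 (sub_nonneg.2 hc)]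

namespace GeneralizedKannan

variable {T : X → X} {l : ℝ}

lemma two_mul_dist_le (hT : GeneralizedKannan T l) {x y z : X}
    (hxy : x ≠ y) (hyz : y ≠ z) (hxz : x ≠ z) :
    2 * dist (T x) (T y) ≤ l * (dist x (T x) + dist y (T y) + dist z (T z)) := by
  have := dist_triangle_right (T x) (T y) (T z)
  linarith [hT x y z hxy hyz hxz]

lemma two_sub_two_mul_mul_dist_le (hT : GeneralizedKannan T l) (hl0 : 0 ≤ l) (hl2 : l ≤ 2)
    {x : X} (h₁ : x ≠ T x) (h₂ : T x ≠ T (T x)) (h₃ : x ≠ T (T x)) :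
    (2 - 2 * l) * dist (T x) (T (T x)) ≤ l * dist x (T x) := by
  refine two_sub_two_mul_mul_le hl0 hl2 (hT.two_mul_dist_le h₁ h₂ h₃)
    (c := dist (T (T x)) (T (T (T x)))) ?_
  have := hT.two_mul_dist_le h₂ h₃.symm h₁.symm
  linarith

lemma cauchySeq_iterate (hT : GeneralizedKannan T l) (hl0 : 0 ≤ l) (hl : l < 2 / 3)
    (hfix : ∀ x, T x ≠ x) (hcycle : ∀ x, T (T x) ≠ x) (x : X) :
    CauchySeq fun n => T^[n] x := by
  have hpos : 0 < 2 - 2 * l := by linarith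
  refine cauchySeq_of_le_geometric (l / (2 - 2 * l)) (dist x (T x))
    (by rw [div_lt_one hpos]; linarith) fun n => ?_
  induction n with
  | zero => simp
  | succ n ih =>
    have hstep := hT.two_sub_two_mul_mul_dist_le hl0 (by linarith) (hfix _).symm
      (hfix _).symm (hcycle (T^[n] x)).symm
    simp only [Function.iterate_succ_apply'] at ih ⊢
    rw [pow_succ, ← mul_assoc, mul_comm _ (l / _)]
    calc dist (T (T^[n] x)) (T (T (T^[n] x)))
        ≤ l / (2 - 2 * l) * dist (T^[n] x) (T (T^[n] x)) := by
          rw [div_mul_eq_mul_div, le_div_iff₀ hpos]; linarith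
      _ ≤ _ := by gcongr

lemma isFixedPt_of_tendsto (hT : GeneralizedKannan T l) (hl : l < 2) {u : ℕ → X}
    (hu : ∀ n, u (n + 1) = T (u n)) (hmove : ∀ n, u n ≠ u (n + 1)) {p : X}
    (hp : Tendsto u atTop (𝓝 p)) : Function.IsFixedPt T p := by
  by_contra hTp
  set c := dist p (T p)
  have hc : 0 < c := dist_pos.2 (Ne.symm hTp)
  have hu₁ : Tendsto (fun n => u (n + 1)) atTop (𝓝 p) := hp.comp (tendsto_add_atTop_nat 1)
  have hu₂ : Tendsto (fun n => u (n + 2)) atTop (𝓝 p) := hp.comp (tendsto_add_atTop_nat 2)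
  have hstep : Tendsto (fun n => dist (u n) (u (n + 1))) atTop (𝓝 0) := by
    simpa using hp.dist hu₁
  -- `u n = p` would force `dist (u n) (u (n + 1)) = c`, which is eventually impossible.
  have hne : ∀ᶠ n in atTop, u n ≠ p := by
    filter_upwards [hstep.eventually_lt_const hc] with n hn hnp
    rw [hu, hnp] at hn
    exact lt_irrefl c hn
  have hbound : ∀ᶠ n in atTop, dist (u (n + 1)) (T p) + dist (u (n + 2)) (T p) ≤
      l * (dist (u n) (u (n + 1)) + dist (u (n + 1)) (u (n + 2)) + c) := by
    filter_upwards [hne, (tendsto_add_atTop_nat 1).eventually hne] with n hn hn₁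
    have := hT _ _ _ (hmove n) hn₁ hn
    rw [← hu, ← hu] at this
    linarith [dist_nonneg (x := u (n + 1)) (y := u (n + 2))]
  have hlim : 2 * c ≤ l * c := by
    refine le_of_tendsto_of_tendsto ?_ ?_ hbound
    · simpa [two_mul] using (hu₁.dist tendsto_const_nhds).add (hu₂.dist tendsto_const_nhds)
    · simpa using ((hstep.add (hstep.comp (tendsto_add_atTop_nat 1))).add_const c).const_mul l
  nlinarith

end GeneralizedKannan

end

theorem stmt_3 {X : Type*} [MetricSpace X] [CompleteSpace X]
    (h3 : 3 ≤ Cardinal.mk X) (T : X → X)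
    (hi : ∀ x : X, T x ≠ x → T (T x) ≠ x)
    (l : ℝ) (hl0 : 0 ≤ l) (hl : l < 2/3)
    (hGK : ∀ x y z : X, x ≠ y → y ≠ z → x ≠ z →
      dist (T x) (T y) + dist (T y) (T z) + dist (T x) (T z) ≤
        l * (dist x (T x) + dist y (T y) + dist z (T z))) :
    ∃ x : X, T x = x := by
  by_contra! hfix
  have hT : GeneralizedKannan T l := hGK
  obtain ⟨x⟩ : Nonempty X :=
    Cardinal.mk_ne_zero_iff.1 fun h => by rw [h] at h3; norm_num at h3
  obtain ⟨p, hp⟩ := cauchySeq_tendsto_of_complete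
    (hT.cauchySeq_iterate hl0 hl hfix (fun y => hi y (hfix y)) x)
  exact hfix p (hT.isFixedPt_of_tendsto (by linarith)
    (fun n => Function.iterate_succ_apply' T n x)
    (fun n => by rw [Function.iterate_succ_apply']; exact (hfix _).symm) hp)
end

section
/- Let (X,d) be a metric space with |X| ≥ 3 and let T : X → X be a generalized Kannan type mapping with some λ ∈ [0, 2/3). Then T has at most two fixed points. -/
theorem stmt_4_general {X : Type*} [MetricSpace X] (T : X → X)
    (l : ℝ)
    (hGK : ∀ x y z : X, x ≠ y → y ≠ z → x ≠ z →
      dist (T x) (T y) + dist (T y) (T z) + dist (T x) (T z) ≤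
        l * (dist x (T x) + dist y (T y) + dist z (T z))) :
    ∀ x y z : X, T x = x → T y = y → T z = z → x = y ∨ y = z ∨ x = z := by
  intro x y z hx hy hz
  by_contra! ⟨hxy, hyz, hxz⟩
  have hkannan := hGK x y z hxy hyz hxz
  rw [hx, hy, hz, dist_self, dist_self, dist_self] at hkannan
  linarith [dist_pos.mpr hxy, dist_pos.mpr hyz, dist_pos.mpr hxz]

theorem stmt_4 {X : Type*} [MetricSpace X] (h3 : 3 ≤ Cardinal.mk X) (T : X → X)
    (l : ℝ) (hl0 : 0 ≤ l) (hl : l < 2/3)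
    (hGK : ∀ x y z : X, x ≠ y → y ≠ z → x ≠ z →
      dist (T x) (T y) + dist (T y) (T z) + dist (T x) (T z) ≤
        l * (dist x (T x) + dist y (T y) + dist z (T z))) :
    ∀ x y z : X, T x = x → T y = y → T z = z → x = y ∨ y = z ∨ x = z :=
  stmt_4_general T l hGK
end

section
/- Let (X,d) be a metric space with |X| ≥ 3, T : X → X a generalized Kannan type mapping with λ ∈ [0, 2/3) satisfying T(T(x)) ≠ x whenever Tx ≠ x, and suppose no iterate xₙ (with x₀ ∈ X, xₙ₊₁ = Txₙ) is a fixed point. Then the sequence (xₙ) is a Cauchy sequence. -/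
/-!
Along an orbit `xₙ₊₁ = T xₙ` with no fixed points, the three points `xₙ, xₙ₊₁, xₙ₊₂` are pairwise
distinct, so the Kannan condition applied to them gives, for `aₙ = d(xₙ, xₙ₊₁)`,
`aₙ₊₁ + aₙ₊₂ ≤ c aₙ` with `c = λ / (1 - λ) < 2`. Summing this over `n < N` yields
`(2 - c) ∑_{n<N} aₙ ≤ 2 a₀ + a₁`, so `∑ aₙ` converges and the orbit is Cauchy.
-/

open Finset

theorem summable_of_add_succ_le_mul {a : ℕ → ℝ} {c : ℝ} (ha : ∀ n, 0 ≤ a n) (hc : c < 2)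
    (h : ∀ n, a (n + 1) + a (n + 2) ≤ c * a n) : Summable a := by
  refine summable_of_sum_range_le ha (c := (2 * a 0 + a 1) / (2 - c)) fun N => ?_
  rw [le_div_iff₀ (by linarith)]
  have hsum : ∑ n ∈ range N, a (n + 1) + ∑ n ∈ range N, a (n + 2) ≤ c * ∑ n ∈ range N, a n := by
    rw [← sum_add_distrib, mul_sum]
    exact sum_le_sum fun n _ => h n
  have hshift₁ : ∑ n ∈ range N, a (n + 1) = ∑ n ∈ range N, a n + a N - a 0 := by
    linarith [sum_range_succ' a N, sum_range_succ a N]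
  have hshift₂ : ∑ n ∈ range N, a (n + 2) = ∑ n ∈ range N, a (n + 1) + a (N + 1) - a 1 := by
    linarith [sum_range_succ' (fun n => a (n + 1)) N, sum_range_succ (fun n => a (n + 1)) N]
  nlinarith [ha N, ha (N + 1)]

theorem sub_mul_dist_orbit_le {X : Type*} [MetricSpace X] {T : X → X} {l : ℝ}
    (hGK : ∀ x y z : X, x ≠ y → y ≠ z → x ≠ z →
      dist (T x) (T y) + dist (T y) (T z) + dist (T x) (T z) ≤
        l * (dist x (T x) + dist y (T y) + dist z (T z)))
    {p : X} (h₀₁ : p ≠ T p) (h₁₂ : T p ≠ T (T p)) (h₀₂ : p ≠ T (T p)) :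
    (1 - l) * (dist (T p) (T (T p)) + dist (T (T p)) (T (T (T p)))) ≤ l * dist p (T p) := by
  have := hGK p (T p) (T (T p)) h₀₁ h₁₂ h₀₂
  nlinarith [dist_nonneg (x := T p) (y := T (T (T p)))]

theorem stmt_6_general {X : Type*} [MetricSpace X] (T : X → X)
    (l : ℝ) (hl : l < 2/3)
    (hGK : ∀ x y z : X, x ≠ y → y ≠ z → x ≠ z →
      dist (T x) (T y) + dist (T y) (T z) + dist (T x) (T z) ≤
        l * (dist x (T x) + dist y (T y) + dist z (T z)))
    (hi : ∀ x : X, T x ≠ x → T (T x) ≠ x)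
    (x : ℕ → X) (hiter : ∀ n, x (n + 1) = T (x n))
    (hnf : ∀ n, T (x n) ≠ x n) :
    CauchySeq x := by
  have hl₁ : 0 < 1 - l := by linarith
  have hstep : ∀ n, dist (x (n + 1)) (x (n + 2)) + dist (x (n + 2)) (x (n + 3)) ≤
      l / (1 - l) * dist (x n) (x (n + 1)) := by
    intro n
    have hTx : T (T (x n)) ≠ T (x n) := by simpa only [hiter] using hnf (n + 1)
    rw [div_mul_eq_mul_div, le_div_iff₀ hl₁, mul_comm]
    simpa only [hiter] using
      sub_mul_dist_orbit_le hGK (hnf n).symm hTx.symm (hi _ (hnf n)).symm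
  refine cauchySeq_of_summable_dist (summable_of_add_succ_le_mul (fun _ => dist_nonneg) ?_ hstep)
  rw [div_lt_iff₀ hl₁]
  linarith

theorem stmt_6 {X : Type*} [MetricSpace X] (h3 : 3 ≤ Cardinal.mk X) (T : X → X)
    (l : ℝ) (hl0 : 0 ≤ l) (hl : l < 2/3)
    (hGK : ∀ x y z : X, x ≠ y → y ≠ z → x ≠ z →
      dist (T x) (T y) + dist (T y) (T z) + dist (T x) (T z) ≤
        l * (dist x (T x) + dist y (T y) + dist z (T z)))
    (hi : ∀ x : X, T x ≠ x → T (T x) ≠ x)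
    (x : ℕ → X) (hiter : ∀ n, x (n + 1) = T (x n))
    (hnf : ∀ n, T (x n) ≠ x n) :
    CauchySeq x :=
  stmt_6_general T l hl hGK hi x hiter hnf
end

section
/- Let (X,d) be a metric space with |X| ≥ 3, T : X → X a generalized Kannan type mapping with λ ∈ [0, 2/3), and suppose x* is a fixed point of T which is the limit of an iteration sequence x₀, x₁ = Tx₀, x₂ = Tx₁, … with xₙ ≠ x* for all n ≥ 1. Then x* is the unique fixed point of T. -/
/-!
Applying the generalized Kannan inequality to the triple `(xₙ, y, x*)`, where `y ≠ x*` is a second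
fixed point, every term on the right except `d(xₙ, xₙ₊₁)` vanishes, so `d(y, x*) ≤ λ d(xₙ, xₙ₊₁)`.
The right-hand side tends to `0` because `xₙ` converges. The triple is admissible because the orbit
avoids `x*` by hypothesis and avoids `y`, since an orbit reaching `y` would stay there and converge
to `y` instead of `x*`.
-/

open Filter Topology Function

lemma ne_fixedPt_of_tendsto {X : Type*} [TopologicalSpace X] [T2Space X] {T : X → X}
    {x : ℕ → X} (hiter : ∀ n, x (n + 1) = T (x n)) {xs y : X}
    (hlim : Tendsto x atTop (𝓝 xs)) (hy : IsFixedPt T y) (hyne : y ≠ xs) (n : ℕ) :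
    x n ≠ y := by
  intro hxn
  have hconst : ∀ m, n ≤ m → x m = y := by
    intro m hm
    induction m, hm using Nat.le_induction with
    | base => exact hxn
    | succ m _ ih => rw [hiter, ih, hy]
  have hlim_y : Tendsto x atTop (𝓝 y) :=
    tendsto_const_nhds.congr' <| (eventually_ge_atTop n).mono fun m hm => (hconst m hm).symm
  exact hyne (tendsto_nhds_unique hlim_y hlim)

lemma tendsto_dist_succ_of_tendsto {X : Type*} [PseudoMetricSpace X] {x : ℕ → X} {xs : X}
    (hlim : Tendsto x atTop (𝓝 xs)) :
    Tendsto (fun n => dist (x n) (x (n + 1))) atTop (𝓝 0) := by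
  simpa using hlim.dist (hlim.comp (tendsto_add_atTop_nat 1))

lemma dist_fixedPts_le_of_generalizedKannan {X : Type*} [PseudoMetricSpace X] {T : X → X}
    {l : ℝ}
    (hGK : ∀ x y z : X, x ≠ y → y ≠ z → x ≠ z →
      dist (T x) (T y) + dist (T y) (T z) + dist (T x) (T z) ≤
        l * (dist x (T x) + dist y (T y) + dist z (T z)))
    {y z : X} (hy : IsFixedPt T y) (hz : IsFixedPt T z) (hyz : y ≠ z)
    {u : X} (huy : u ≠ y) (huz : u ≠ z) :
    dist y z ≤ l * dist u (T u) := by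
  have h := hGK u y z huy hyz huz
  rw [hy.eq, hz.eq, dist_self, dist_self, add_zero, add_zero] at h
  linarith [dist_nonneg (x := T u) (y := y), dist_nonneg (x := T u) (y := z)]

theorem stmt_7_general {X : Type*} [MetricSpace X] (T : X → X)
    (l : ℝ)
    (hGK : ∀ x y z : X, x ≠ y → y ≠ z → x ≠ z →
      dist (T x) (T y) + dist (T y) (T z) + dist (T x) (T z) ≤
        l * (dist x (T x) + dist y (T y) + dist z (T z)))
    (xs : X) (hfix : T xs = xs)
    (x : ℕ → X) (hiter : ∀ n, x (n + 1) = T (x n))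
    (hne : ∀ n, 1 ≤ n → x n ≠ xs)
    (hlim : Filter.Tendsto x Filter.atTop (nhds xs)) :
    ∀ y : X, T y = y → y = xs := by
  intro y hy
  by_contra hyne
  have hbound : ∀ᶠ n in atTop, dist y xs ≤ l * dist (x n) (x (n + 1)) := by
    filter_upwards [eventually_ge_atTop 1] with n hn
    rw [hiter n]
    exact dist_fixedPts_le_of_generalizedKannan hGK hy hfix hyne
      (ne_fixedPt_of_tendsto hiter hlim hy hyne n) (hne n hn)
  have hzero : dist y xs ≤ 0 := by
    simpa using ge_of_tendsto ((tendsto_dist_succ_of_tendsto hlim).const_mul l) hbound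
  exact hyne (dist_le_zero.mp hzero)

theorem stmt_7 {X : Type*} [MetricSpace X] (h3 : 3 ≤ Cardinal.mk X) (T : X → X)
    (l : ℝ) (hl0 : 0 ≤ l) (hl : l < 2/3)
    (hGK : ∀ x y z : X, x ≠ y → y ≠ z → x ≠ z →
      dist (T x) (T y) + dist (T y) (T z) + dist (T x) (T z) ≤
        l * (dist x (T x) + dist y (T y) + dist z (T z)))
    (xs : X) (hfix : T xs = xs)
    (x : ℕ → X) (hiter : ∀ n, x (n + 1) = T (x n))
    (hne : ∀ n, 1 ≤ n → x n ≠ xs)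
    (hlim : Filter.Tendsto x Filter.atTop (nhds xs)) :
    ∀ y : X, T y = y → y = xs :=
  stmt_7_general T l hGK xs hfix x hiter hne hlim
end

section
/- Let X = [0,1] with the Euclidean metric and let T : X → X be defined by T(x) = x/a for a real number a > 1. Then T is a generalized Kannan type mapping (i.e., there exists λ ∈ [0, 2/3) with d(Tx,Ty)+d(Ty,Tz)+d(Tx,Tz) ≤ λ(d(x,Tx)+d(y,Ty)+d(z,Tz)) for all pairwise distinct x,y,z) if and only if a > 4. -/
theorem stmt_12 (a : ℝ) (ha : 1 < a) :
    (∃ l : ℝ, 0 ≤ l ∧ l < 2/3 ∧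
      ∀ x ∈ Set.Icc (0:ℝ) 1, ∀ y ∈ Set.Icc (0:ℝ) 1, ∀ z ∈ Set.Icc (0:ℝ) 1,
        x ≠ y → y ≠ z → x ≠ z →
        |x/a - y/a| + |y/a - z/a| + |x/a - z/a| ≤
          l * (|x - x/a| + |y - y/a| + |z - z/a|)) ↔ 4 < a := by
  have ha0 : (0:ℝ) < a := by linarith
  constructor
  · rintro ⟨l, hl0, hl23, hl⟩
    by_contra hle
    push_neg at hle
    set c : ℝ := l * (a - 1) with hc
    have hc2 : c < 2 := by nlinarith
    have hc0 : 0 ≤ c := by nlinarith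
    set ε : ℝ := min (1/2) ((2 - c)/2) with hε
    have hε0 : 0 < ε := by
      apply lt_min (by norm_num) (by linarith)
    have hε1 : ε < 1 := lt_of_le_of_lt (min_le_left _ _) (by norm_num)
    have hεc : ε ≤ (2 - c)/2 := min_le_right _ _
    have key := hl 0 ⟨le_refl 0, by norm_num⟩ ε ⟨le_of_lt hε0, by linarith⟩ 1
      ⟨by norm_num, le_refl 1⟩ (ne_of_lt hε0) (by linarith) (by norm_num)
    have e1 : |(0:ℝ)/a - ε/a| = ε/a := by
      rw [zero_div, zero_sub, abs_neg, abs_of_pos (by positivity)]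
    have e2 : |ε/a - 1/a| = (1 - ε)/a := by
      rw [show ε/a - 1/a = -((1-ε)/a) by ring, abs_neg,
        abs_of_pos (by apply div_pos <;> linarith)]
    have e3 : |(0:ℝ)/a - 1/a| = 1/a := by
      rw [zero_div, zero_sub, abs_neg, abs_of_pos (by positivity)]
    have e4 : |(0:ℝ) - 0/a| = 0 := by simp
    have e5 : |ε - ε/a| = ε * (a-1)/a := by
      rw [show ε - ε/a = ε*(a-1)/a by field_simp,
        abs_of_nonneg (div_nonneg (by nlinarith) ha0.le)]
    have e6 : |(1:ℝ) - 1/a| = (a-1)/a := by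
      rw [show (1:ℝ) - 1/a = (a-1)/a by field_simp,
        abs_of_nonneg (div_nonneg (by linarith) ha0.le)]
    rw [e1, e2, e3, e4, e5, e6] at key
    have key2 : 2 ≤ c * (1 + ε) := by
      have h2 : (2:ℝ)/a ≤ c * (1 + ε) / a := by
        calc (2:ℝ)/a = ε/a + (1-ε)/a + 1/a := by ring
        _ ≤ l * (0 + ε*(a-1)/a + (a-1)/a) := key
        _ = c * (1 + ε) / a := by rw [hc]; ring
      exact (div_le_div_iff_of_pos_right ha0).mp h2
    nlinarith
  · intro ha4
    refine ⟨2/(a-1), div_nonneg (by norm_num) (by linarith), by rw [div_lt_div_iff₀] <;> linarith, ?_⟩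
    rintro x ⟨hx0, hx1⟩ y ⟨hy0, hy1⟩ z ⟨hz0, hz1⟩ _ _ _
    have e1 : |x/a - y/a| = |x - y|/a := by
      rw [show x/a - y/a = (x-y)/a by ring, abs_div, abs_of_pos ha0]
    have e2 : |y/a - z/a| = |y - z|/a := by
      rw [show y/a - z/a = (y-z)/a by ring, abs_div, abs_of_pos ha0]
    have e3 : |x/a - z/a| = |x - z|/a := by
      rw [show x/a - z/a = (x-z)/a by ring, abs_div, abs_of_pos ha0]
    have e4 : |x - x/a| = x*(a-1)/a := by
      rw [show x - x/a = x*(a-1)/a by field_simp,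
        abs_of_nonneg (div_nonneg (by nlinarith) ha0.le)]
    have e5 : |y - y/a| = y*(a-1)/a := by
      rw [show y - y/a = y*(a-1)/a by field_simp,
        abs_of_nonneg (div_nonneg (by nlinarith) ha0.le)]
    have e6 : |z - z/a| = z*(a-1)/a := by
      rw [show z - z/a = z*(a-1)/a by field_simp,
        abs_of_nonneg (div_nonneg (by nlinarith) ha0.le)]
    rw [e1, e2, e3, e4, e5, e6]
    have h1 : |x - y| ≤ x + y := abs_le.mpr ⟨by linarith, by linarith⟩
    have h2 : |y - z| ≤ y + z := abs_le.mpr ⟨by linarith, by linarith⟩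
    have h3 : |x - z| ≤ x + z := abs_le.mpr ⟨by linarith, by linarith⟩
    have hrhs : 2/(a-1) * (x*(a-1)/a + y*(a-1)/a + z*(a-1)/a)
        = 2*(x+y+z)/a := by field_simp [sub_ne_zero_of_ne (ne_of_gt ha)]
    rw [hrhs]
    rw [← add_div, ← add_div, div_le_div_iff₀ ha0 ha0]
    nlinarith
end

section
/- For a ∈ (3,4], the mapping T(x) = x/a on X = [0,1] with the Euclidean metric is a Kannan type mapping but not a generalized Kannan type mapping. Hence the classes of Kannan type mappings and generalized Kannan type mappings are incomparable (neither contains the other). -/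
theorem stmt_13 (a : ℝ) (ha1 : 3 < a) (ha2 : a ≤ 4) :
    (∃ l : ℝ, 0 ≤ l ∧ l < 1/2 ∧
      ∀ x ∈ Set.Icc (0:ℝ) 1, ∀ y ∈ Set.Icc (0:ℝ) 1,
        |x/a - y/a| ≤ l * (|x - x/a| + |y - y/a|)) ∧
    ¬ (∃ l : ℝ, 0 ≤ l ∧ l < 2/3 ∧
      ∀ x ∈ Set.Icc (0:ℝ) 1, ∀ y ∈ Set.Icc (0:ℝ) 1, ∀ z ∈ Set.Icc (0:ℝ) 1,
        x ≠ y → y ≠ z → x ≠ z →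
        |x/a - y/a| + |y/a - z/a| + |x/a - z/a| ≤
          l * (|x - x/a| + |y - y/a| + |z - z/a|)) := by
  have ha0 : (0:ℝ) < a := by linarith
  have ha1' : (0:ℝ) < a - 1 := by linarith
  constructor
  · refine ⟨1/(a-1), by positivity, ?_, ?_⟩
    · rw [div_lt_div_iff₀ ha1' (by norm_num)]; linarith
    · rintro x ⟨hx0, hx1⟩ y ⟨hy0, hy1⟩
      have hxx : |x - x/a| = x * (a-1) / a := by
        rw [abs_of_nonneg (by rw [sub_nonneg]; apply div_le_self hx0; linarith)]
        field_simp
      have hyy : |y - y/a| = y * (a-1) / a := by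
        rw [abs_of_nonneg (by rw [sub_nonneg]; apply div_le_self hy0; linarith)]
        field_simp
      rw [hxx, hyy]
      have hxy : |x/a - y/a| = |x - y| / a := by
        rw [div_sub_div_same, abs_div, abs_of_pos ha0]
      rw [hxy]
      have h1 : |x - y| ≤ x + y := abs_sub_le_of_nonneg_of_le hx0 (by linarith) hy0 (by linarith)
      rw [div_le_iff₀ ha0]
      have : 1/(a-1) * (x * (a-1)/a + y * (a-1)/a) * a = x + y := by
        field_simp
      rw [this]; exact h1
  · rintro ⟨l, hl0, hl, h⟩
    set c := l * (a - 1) with hc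
    have hc2 : c < 2 := by nlinarith
    have hc0 : 0 ≤ c := by positivity
    set t := min (1/2 : ℝ) ((2 - c)/4) with ht
    have ht0 : 0 < t := by
      apply lt_min (by norm_num); linarith
    have ht1 : t ≤ 1/2 := min_le_left _ _
    have htc : c * t < 2 - c := by
      calc c * t ≤ 2 * t := by nlinarith
        _ ≤ 2 * ((2-c)/4) := by nlinarith [min_le_right (1/2 : ℝ) ((2-c)/4)]
        _ < 2 - c := by linarith
    have key := h 1 ⟨by norm_num, le_refl 1⟩ t ⟨le_of_lt ht0, by linarith⟩ 0
      ⟨le_refl 0, by norm_num⟩ (by intro he; rw [← he] at ht1; norm_num at ht1)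
      (ne_of_gt ht0) (by norm_num)
    have e1 : |1/a - t/a| = (1 - t)/a := by
      rw [div_sub_div_same, abs_of_nonneg (div_nonneg (by linarith) ha0.le)]
    have e2 : |t/a - 0/a| = t/a := by
      rw [zero_div, sub_zero, abs_of_nonneg (by positivity)]
    have e3 : |1/a - 0/a| = 1/a := by
      rw [zero_div, sub_zero, abs_of_nonneg (by positivity)]
    have e4 : |1 - 1/a| = (a-1)/a := by
      rw [abs_of_nonneg (by rw [sub_nonneg]; rw [div_le_one ha0]; linarith)]
      field_simp
    have e5 : |t - t/a| = t * (a-1)/a := by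
      rw [abs_of_nonneg (by rw [sub_nonneg]; exact div_le_self (le_of_lt ht0) (by linarith))]
      field_simp
    have e6 : |(0:ℝ) - 0/a| = 0 := by simp
    rw [e1, e2, e3, e4, e5, e6] at key
    have : 2 ≤ c * (1 + t) := by
      rw [← add_div, ← add_div, div_le_iff₀ ha0] at key
      · calc 2 = (1 - t + t + 1) := by ring
          _ ≤ l * ((a-1)/a + t*(a-1)/a + 0) * a := key
          _ = c * (1 + t) := by field_simp; ring
    nlinarith
end

section
/- There exist real numbers a > b > 1 such that the mapping T : [0,1] → [0,1] defined by T(x) = x/a for x ∈ [0,1/2] and T(x) = x/b for x ∈ (1/2,1] is a discontinuous generalized Kannan type mapping (discontinuous at x = 1/2, and satisfying the generalized Kannan inequality for some λ ∈ [0, 2/3)). -/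
/-! The map `T` contracts every point of `[0, 1]` by a factor at least `b`, so each distance
`|T x - T y|` is at most `(x + y) / b`, while each displacement `|t - T t|` is at least
`(1 - 1/b) t`. Hence the generalized Kannan inequality holds as soon as `2 ≤ λ (b - 1)`, which
for `b = 5` allows `λ = 1/2 < 2/3`. The jump `c/a ≠ c/b` at `c = 1/2` gives the discontinuity. -/

open Filter Topology Set

theorem not_continuousWithinAt_ite_div {a b c : ℝ} {s : Set ℝ} (hab : a ≠ b) (hc : c ≠ 0)
    (hs : s ∈ 𝓝[>] c) :
    ¬ ContinuousWithinAt (fun x : ℝ => if x ≤ c then x / a else x / b) s c := by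
  intro h
  have hleft : Tendsto (fun x : ℝ => if x ≤ c then x / a else x / b) (𝓝[>] c) (𝓝 (c / a)) := by
    simpa using (h.mono_of_mem_nhdsWithin hs).tendsto
  have hright : Tendsto (fun x : ℝ => if x ≤ c then x / a else x / b) (𝓝[>] c) (𝓝 (c / b)) := by
    refine (((continuous_id.div_const b).tendsto c).mono_left nhdsWithin_le_nhds).congr' ?_
    filter_upwards [self_mem_nhdsWithin] with x hx
    simp [not_le.2 (mem_Ioi.1 hx)]
  have hinv : a⁻¹ = b⁻¹ := by
    simpa [div_eq_mul_inv, hc] using tendsto_nhds_unique hleft hright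
  exact hab (inv_injective hinv)

theorem ite_div_mem_Icc {a b c t : ℝ} (ht : 0 ≤ t) (hb : 0 < b) (hba : b ≤ a) :
    (if t ≤ c then t / a else t / b) ∈ Icc 0 (t / b) := by
  split_ifs
  · exact ⟨div_nonneg ht (hb.trans_le hba).le, div_le_div_of_nonneg_left ht hb hba⟩
  · exact ⟨div_nonneg ht hb.le, le_rfl⟩

theorem abs_sub_le_add_of_nonneg {u v : ℝ} (hu : 0 ≤ u) (hv : 0 ≤ v) : |u - v| ≤ u + v := by
  simpa [abs_of_nonneg hu, abs_of_nonneg hv] using abs_sub u v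

theorem kannan_sum_le_of_mem_Icc_div {T : ℝ → ℝ} {b l x y z : ℝ} (hb : 1 < b) (hl : 0 ≤ l)
    (hbl : 2 ≤ l * (b - 1)) (hT : ∀ t, 0 ≤ t → T t ∈ Icc 0 (t / b))
    (hx : 0 ≤ x) (hy : 0 ≤ y) (hz : 0 ≤ z) :
    |T x - T y| + |T y - T z| + |T x - T z| ≤ l * (|x - T x| + |y - T y| + |z - T z|) := by
  obtain ⟨hTx, hTx'⟩ := hT x hx
  obtain ⟨hTy, hTy'⟩ := hT y hy
  obtain ⟨hTz, hTz'⟩ := hT z hz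
  have hdisp : ∀ t, T t ≤ t / b → (b - 1) * (t / b) ≤ |t - T t| := fun t hTt => by
    have : (b - 1) * (t / b) = t - t / b := by field_simp
    rw [this]
    exact (sub_le_sub_left hTt t).trans (le_abs_self _)
  calc |T x - T y| + |T y - T z| + |T x - T z|
      ≤ (T x + T y) + (T y + T z) + (T x + T z) := by
        gcongr <;> exact abs_sub_le_add_of_nonneg ‹_› ‹_›
    _ ≤ 2 * (x / b + y / b + z / b) := by linarith
    _ ≤ l * (b - 1) * (x / b + y / b + z / b) := by gcongr
    _ = l * ((b - 1) * (x / b) + (b - 1) * (y / b) + (b - 1) * (z / b)) := by ring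
    _ ≤ l * (|x - T x| + |y - T y| + |z - T z|) := by
        gcongr
        · exact hdisp x hTx'
        · exact hdisp y hTy'
        · exact hdisp z hTz'

theorem stmt_14 :
    ∃ a b : ℝ, b < a ∧ 1 < b ∧
      ¬ ContinuousWithinAt (fun x : ℝ => if x ≤ 1/2 then x/a else x/b)
          (Set.Icc (0:ℝ) 1) (1/2) ∧
      ∃ l : ℝ, 0 ≤ l ∧ l < 2/3 ∧
        ∀ x ∈ Set.Icc (0:ℝ) 1, ∀ y ∈ Set.Icc (0:ℝ) 1, ∀ z ∈ Set.Icc (0:ℝ) 1,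
          x ≠ y → y ≠ z → x ≠ z →
          (let T : ℝ → ℝ := fun t => if t ≤ 1/2 then t/a else t/b
           |T x - T y| + |T y - T z| + |T x - T z| ≤
             l * (|x - T x| + |y - T y| + |z - T z|)) := by
  refine ⟨6, 5, by norm_num, by norm_num, ?_, 1/2, by norm_num, by norm_num, ?_⟩
  · exact not_continuousWithinAt_ite_div (by norm_num) (by norm_num)
      (Icc_mem_nhdsGT_of_mem ⟨by norm_num, by norm_num⟩)
  · intro x hx y hy z hz _ _ _
    exact kannan_sum_le_of_mem_Icc_div (by norm_num) (by norm_num) (by norm_num)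
      (fun t ht => ite_div_mem_Icc ht (by norm_num) (by norm_num)) hx.1 hy.1 hz.1
end

section
/- Let (X,d) be a metric space with |X| ≥ 3, T : X → X a generalized Kannan type mapping with λ ∈ [0, 2/3), and suppose the iterates xₙ (x₀ ∈ X, xₙ₊₁ = Txₙ) are pairwise distinct and converge to a point x* ∈ X. Then x* is a fixed point of T, and moreover d(x*, Tx*) ≤ (1/(1−λ))·(d(x*, xₙ) + λ(d(xₙ₋₁, xₙ) + d(xₙ, xₙ₊₁))) for all n ≥ 1 with xₙ, xₙ₋₁ ≠ x*. -/
/-!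
Applying the generalized Kannan inequality to the triple `xₙ, xₙ₊₁, x*` and the triangle
inequality `d(x*, Tx*) ≤ d(x*, xₙ₊₁) + d(Txₙ, Tx*)` gives the a posteriori bound. Along the
orbit its right-hand side tends to `0`, and since the orbit is injective it eventually avoids
`x*`, so the bound applies for all large `n` and forces `d(x*, Tx*) = 0`.
-/

open Filter Topology

namespace IsGeneralizedKannan

variable {X : Type*} [MetricSpace X] {T : X → X} {l : ℝ}

theorem dist_apply_le (hT : IsGeneralizedKannan T l) (hl : l < 1) {u p : X}
    (hu : u ≠ T u) (hTu : T u ≠ p) (hup : u ≠ p) :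
    dist p (T p) ≤ 1 / (1 - l) * (dist p (T u) + l * (dist u (T u) + dist (T u) (T (T u)))) := by
  have hkannan := hT u (T u) p hu hTu hup
  have htri := dist_triangle p (T u) (T p)
  have h₁ := dist_nonneg (x := T u) (y := T (T u))
  have h₂ := dist_nonneg (x := T (T u)) (y := T p)
  rw [one_div, ← div_eq_inv_mul, le_div_iff₀ (by linarith)]
  linarith

end IsGeneralizedKannan

theorem Function.Injective.eventually_ne_atTop {X : Type*} {x : ℕ → X}
    (hx : Function.Injective x) (p : X) : ∀ᶠ n in atTop, x n ≠ p := by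
  rw [← Nat.cofinite_eq_atTop]
  exact hx.tendsto_cofinite.eventually (eventually_cofinite_ne p)

theorem stmt_15_general {X : Type*} [MetricSpace X] (T : X → X)
    (l : ℝ) (hl : l < 2/3)
    (hGK : ∀ x y z : X, x ≠ y → y ≠ z → x ≠ z →
      dist (T x) (T y) + dist (T y) (T z) + dist (T x) (T z) ≤
        l * (dist x (T x) + dist y (T y) + dist z (T z)))
    (x : ℕ → X) (hiter : ∀ n, x (n + 1) = T (x n))
    (hinj : Function.Injective x)
    (xs : X) (hlim : Filter.Tendsto x Filter.atTop (nhds xs)) :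
    T xs = xs ∧
    ∀ n : ℕ, x n ≠ xs → x (n+1) ≠ xs →
      dist xs (T xs) ≤
        (1/(1-l)) * (dist xs (x (n+1)) +
          l * (dist (x n) (x (n+1)) + dist (x (n+1)) (x (n+2)))) := by
  have hbound : ∀ n : ℕ, x n ≠ xs → x (n+1) ≠ xs →
      dist xs (T xs) ≤ (1/(1-l)) * (dist xs (x (n+1)) +
        l * (dist (x n) (x (n+1)) + dist (x (n+1)) (x (n+2)))) := by
    intro n hn hn₁
    have hstep : x n ≠ x (n+1) := hinj.ne (by omega)
    simp only [hiter] at hn₁ hstep ⊢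
    exact IsGeneralizedKannan.dist_apply_le hGK (by linarith) hstep hn₁ hn
  have hlim₁ : Tendsto (fun n => x (n+1)) atTop (𝓝 xs) := hlim.comp (tendsto_add_atTop_nat 1)
  have hlim₂ : Tendsto (fun n => x (n+2)) atTop (𝓝 xs) := hlim.comp (tendsto_add_atTop_nat 2)
  have hbound_tendsto : Tendsto (fun n => (1/(1-l)) * (dist xs (x (n+1)) +
      l * (dist (x n) (x (n+1)) + dist (x (n+1)) (x (n+2))))) atTop (𝓝 0) := by
    simpa using (((tendsto_const_nhds (x := xs)).dist hlim₁).add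
      (((hlim.dist hlim₁).add (hlim₁.dist hlim₂)).const_mul l)).const_mul (1/(1-l))
  have hle : dist xs (T xs) ≤ 0 := ge_of_tendsto hbound_tendsto <|
    ((hinj.eventually_ne_atTop xs).and ((tendsto_add_atTop_nat 1).eventually
      (hinj.eventually_ne_atTop xs))).mono fun n hn => hbound n hn.1 hn.2
  exact ⟨(dist_le_zero.1 hle).symm, hbound⟩

theorem stmt_15 {X : Type*} [MetricSpace X] (h3 : 3 ≤ Cardinal.mk X) (T : X → X)
    (l : ℝ) (hl0 : 0 ≤ l) (hl : l < 2/3)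
    (hGK : ∀ x y z : X, x ≠ y → y ≠ z → x ≠ z →
      dist (T x) (T y) + dist (T y) (T z) + dist (T x) (T z) ≤
        l * (dist x (T x) + dist y (T y) + dist z (T z)))
    (x : ℕ → X) (hiter : ∀ n, x (n + 1) = T (x n))
    (hinj : Function.Injective x)
    (xs : X) (hlim : Filter.Tendsto x Filter.atTop (nhds xs)) :
    T xs = xs ∧
    ∀ n : ℕ, x n ≠ xs → x (n+1) ≠ xs →
      dist xs (T xs) ≤
        (1/(1-l)) * (dist xs (x (n+1)) +
          l * (dist (x n) (x (n+1)) + dist (x (n+1)) (x (n+2)))) :=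
  stmt_15_general T l hl hGK x hiter hinj xs hlim
end

section
/- Let (aₙ)ₙ≥₁ be a sequence of nonnegative reals, α ∈ [0,1), a = max{a₁, a₂}, and suppose aₙ₊₂ ≤ α·max{aₙ, aₙ₊₁} for all n ≥ 1. Then aₙ ≤ α^{(n/2)−1}·a for all n ≥ 3, and if (aₙ) are the consecutive distances d(xₙ₋₁,xₙ) of a sequence (xₙ) in a metric space, then (xₙ) is Cauchy. -/
/-!
Pairing the terms as `(a₁, a₂), (a₃, a₄), …`, the recursion shows that each pair is bounded by
`α` times the bound of the previous pair, so `aₙ ≤ α^⌊(n-1)/2⌋ · a`. The consecutive distances are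
then dominated by a geometric sequence of ratio `√α < 1`, which makes `(xₙ)` Cauchy.
-/

theorem le_pow_div_two_mul_of_le_mul_max {b : ℕ → ℝ} {α M : ℝ} (hα0 : 0 ≤ α) (hα1 : α ≤ 1)
    (hM : 0 ≤ M) (hb0 : b 0 ≤ M) (hb1 : b 1 ≤ M)
    (hrec : ∀ n, b (n + 2) ≤ α * max (b n) (b (n + 1))) (n : ℕ) :
    b n ≤ α ^ (n / 2) * M := by
  have hpair : ∀ k, b (2 * k) ≤ α ^ k * M ∧ b (2 * k + 1) ≤ α ^ k * M := by
    intro k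
    induction k with
    | zero => simpa using ⟨hb0, hb1⟩
    | succ k ih =>
      have hstep : α * (α ^ k * M) = α ^ (k + 1) * M := by ring
      have heven : b (2 * (k + 1)) ≤ α ^ (k + 1) * M :=
        calc b (2 * (k + 1)) ≤ α * max (b (2 * k)) (b (2 * k + 1)) := hrec (2 * k)
          _ ≤ α * (α ^ k * M) := by gcongr; exact max_le ih.1 ih.2
          _ = α ^ (k + 1) * M := hstep
      have hdecay : α ^ (k + 1) * M ≤ α ^ k * M :=
        mul_le_mul_of_nonneg_right (pow_le_pow_of_le_one hα0 hα1 (Nat.le_succ k)) hM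
      refine ⟨heven, ?_⟩
      calc b (2 * (k + 1) + 1) ≤ α * max (b (2 * k + 1)) (b (2 * (k + 1))) := hrec (2 * k + 1)
        _ ≤ α * (α ^ k * M) := by gcongr; exact max_le ih.2 (heven.trans hdecay)
        _ = α ^ (k + 1) * M := hstep
  rcases Nat.even_or_odd' n with ⟨k, rfl | rfl⟩
  · simpa [Nat.mul_div_cancel_left k two_pos] using (hpair k).1
  · simpa [Nat.mul_add_div two_pos] using (hpair k).2

theorem pow_le_rpow_div_two_sub_one {α : ℝ} (hα0 : 0 ≤ α) (hα1 : α ≤ 1) {n : ℕ} (hn : 2 ≤ n) :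
    α ^ ((n - 1) / 2) ≤ α ^ ((n : ℝ) / 2 - 1) := by
  rw [← Real.rpow_natCast]
  apply Real.rpow_le_rpow_of_exponent_ge' hα0 hα1
  · have : (2 : ℝ) ≤ n := by exact_mod_cast hn
    linarith
  · have h : n ≤ 2 * ((n - 1) / 2) + 2 := by omega
    have h' : (n : ℝ) ≤ 2 * ((n - 1) / 2 : ℕ) + 2 := by exact_mod_cast h
    linarith

theorem cauchySeq_of_dist_le_mul_pow_div_two {X : Type*} [PseudoMetricSpace X] {x : ℕ → X}
    {α C : ℝ} (hα0 : 0 ≤ α) (hα1 : α < 1)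
    (hdist : ∀ n, dist (x n) (x (n + 1)) ≤ C * α ^ (n / 2)) : CauchySeq x := by
  have hC : 0 ≤ C := by simpa using dist_nonneg.trans (hdist 0)
  set r := Real.sqrt α
  have hr0 : 0 ≤ r := Real.sqrt_nonneg α
  have hr1 : r < 1 := by simpa using Real.sqrt_lt_sqrt hα0 hα1
  -- Shifting by one turns the bound `α^⌊(n+1)/2⌋ = r^(2⌊(n+1)/2⌋)` into a geometric one.
  have hgeom : ∀ n, dist (x (n + 1)) (x (n + 1 + 1)) ≤ C * r ^ n := by
    intro n
    have hpow : α ^ ((n + 1) / 2) ≤ r ^ n := by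
      rw [← Real.sq_sqrt hα0, ← pow_mul]
      exact pow_le_pow_of_le_one hr0 hr1.le (by omega)
    exact (hdist (n + 1)).trans (by gcongr)
  exact (cauchySeq_shift 1).mp (cauchySeq_of_le_geometric r C hr1 hgeom)

theorem stmt_17 (a : ℕ → ℝ) (α : ℝ) (hα0 : 0 ≤ α) (hα1 : α < 1)
    (hnn : ∀ n, 1 ≤ n → 0 ≤ a n)
    (hrec : ∀ n, 1 ≤ n → a (n + 2) ≤ α * max (a n) (a (n + 1))) :
    (∀ n : ℕ, 3 ≤ n → a n ≤ α ^ ((n : ℝ)/2 - 1) * max (a 1) (a 2)) ∧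
    (∀ (X : Type) (_ : MetricSpace X) (x : ℕ → X),
      (∀ n, 1 ≤ n → a n = dist (x (n - 1)) (x n)) → CauchySeq x) := by
  set M := max (a 1) (a 2)
  have hM : 0 ≤ M := (hnn 1 le_rfl).trans (le_max_left _ _)
  have hbound : ∀ n, a (n + 1) ≤ α ^ (n / 2) * M :=
    le_pow_div_two_mul_of_le_mul_max (b := fun n ↦ a (n + 1)) hα0 hα1.le hM
      (le_max_left _ _) (le_max_right _ _) (fun n ↦ hrec (n + 1) (Nat.le_add_left 1 n))
  refine ⟨fun n hn ↦ ?_, fun X _ x hx ↦ ?_⟩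
  · obtain ⟨m, rfl⟩ : ∃ m, n = m + 1 := ⟨n - 1, by omega⟩
    calc a (m + 1) ≤ α ^ ((m + 1 - 1) / 2) * M := hbound m
      _ ≤ α ^ (((m + 1 : ℕ) : ℝ) / 2 - 1) * M := by
        gcongr; exact pow_le_rpow_div_two_sub_one hα0 hα1.le (by omega)
  · refine cauchySeq_of_dist_le_mul_pow_div_two (C := M) hα0 hα1 fun n ↦ ?_
    have hd := hx (n + 1) (Nat.le_add_left 1 n)
    rw [Nat.add_sub_cancel] at hd
    rw [mul_comm, ← hd]
    exact hbound n
end
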